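/- For every z = (a, t) with a = (a₁,…,aₙ) a nonempty tuple and every x, y ∈ X: ‖μ(z) − μ(xzy)‖₁ ≤ (2 / (|z|₀² + |z|₁))·(4|z|₀ + 4 + |x|_X + |y|_X), where xzy := ((x, a₁,…,aₙ, t·y), t) is obtained by prepending the letter x and appending the letter t·y. -/
import Mathlib


/-- The ℓ¹-norm of a finitely supported real-valued function. -/
def l1Norm {X : Type*} (φ : X →₀ ℝ) : ℝ := ∑ x ∈ φ.support, |φ x|

/-- `ω(z)` for `z = (x, g)` with `x = (x₁,…,xₘ)` a tuple in `X` and `g ∈ Γ`: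
`ω(z) = Σᵢ (m + min{|xᵢ|_X, |g⁻¹·xᵢ|_X})·δ_{xᵢ}`. -/
noncomputable def omegaTuple {X Γ : Type*} [Group Γ] [MulAction Γ X] (nX : X → ℝ)
    {m : ℕ} (x : Fin m → X) (g : Γ) : X →₀ ℝ :=
  ∑ i, Finsupp.single (x i) ((m : ℝ) + min (nX (x i)) (nX (g⁻¹ • x i)))

/-- `μ(z) := ω(z)/‖ω(z)‖₁`. -/
noncomputable def muTuple {X Γ : Type*} [Group Γ] [MulAction Γ X] (nX : X → ℝ)
    {m : ℕ} (x : Fin m → X) (g : Γ) : X →₀ ℝ :=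
  (l1Norm (omegaTuple nX x g))⁻¹ • omegaTuple nX x g

section Helpers
variable {α : Type*}

lemma l1Norm_eq_sum_subset (φ : α →₀ ℝ) {s : Finset α} (h : φ.support ⊆ s) :
    l1Norm φ = ∑ x ∈ s, |φ x| :=
  Finset.sum_subset h (fun x _ hx => by
    simp [Finsupp.notMem_support_iff.mp hx])

lemma l1Norm_add_le (φ ψ : α →₀ ℝ) : l1Norm (φ + ψ) ≤ l1Norm φ + l1Norm ψ := by
  classical
  rw [l1Norm_eq_sum_subset (φ + ψ) Finsupp.support_add,
      l1Norm_eq_sum_subset φ (Finset.subset_union_left (s₂ := ψ.support)),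
      l1Norm_eq_sum_subset ψ (Finset.subset_union_right (s₁ := φ.support)),
      ← Finset.sum_add_distrib]
  exact Finset.sum_le_sum fun z _ => by simpa using abs_add_le (φ z) (ψ z)

lemma l1Norm_smul (c : ℝ) (φ : α →₀ ℝ) : l1Norm (c • φ) = |c| * l1Norm φ := by
  rcases eq_or_ne c 0 with rfl | hc
  · simp [l1Norm]
  · unfold l1Norm
    rw [Finsupp.support_smul_eq hc, Finset.mul_sum]
    exact Finset.sum_congr rfl fun z _ => by simp [abs_mul]

lemma l1Norm_neg (φ : α →₀ ℝ) : l1Norm (-φ) = l1Norm φ := by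
  rw [← neg_one_smul ℝ φ, l1Norm_smul]; simp

lemma l1Norm_single_le (p : α) (v : ℝ) : l1Norm (Finsupp.single p v) ≤ |v| := by
  rcases eq_or_ne v 0 with rfl | hv
  · simp [l1Norm]
  · simp [l1Norm, Finsupp.support_single_ne_zero p hv]

lemma l1Norm_sum_le {ι : Type*} (s : Finset ι) (f : ι → α →₀ ℝ) :
    l1Norm (∑ i ∈ s, f i) ≤ ∑ i ∈ s, l1Norm (f i) := by
  induction s using Finset.cons_induction with
  | empty => simp [l1Norm]
  | cons i s hi ih =>
    rw [Finset.sum_cons, Finset.sum_cons]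
    exact (l1Norm_add_le _ _).trans (by linarith)

lemma l1Norm_sum_single {ι : Type*} (s : Finset ι) (p : ι → α) (v : ι → ℝ)
    (hv : ∀ i, 0 ≤ v i) :
    l1Norm (∑ i ∈ s, Finsupp.single (p i) (v i)) = ∑ i ∈ s, v i := by
  classical
  have hnn : ∀ z, 0 ≤ (∑ i ∈ s, Finsupp.single (p i) (v i)) z := by
    intro z
    rw [Finsupp.finset_sum_apply]
    refine Finset.sum_nonneg fun i _ => ?_
    rw [Finsupp.single_apply]
    split <;> simp [hv i]
  have h1 : l1Norm (∑ i ∈ s, Finsupp.single (p i) (v i))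
      = (∑ i ∈ s, Finsupp.single (p i) (v i)).sum fun _ w => w := by
    unfold l1Norm Finsupp.sum
    exact Finset.sum_congr rfl fun z _ => abs_of_nonneg (hnn z)
  rw [h1, ← Finsupp.sum_finset_sum_index (by simp) (by intros; rfl)]
  exact Finset.sum_congr rfl fun i _ => Finsupp.sum_single_index rfl

lemma sum_consSnoc {M : Type*} [AddCommMonoid M] {k : ℕ} (F : α → M)
    (a : Fin k → α) (x z : α) :
    ∑ j : Fin (k + 2), F ((Fin.cons x (Fin.snoc a z) : Fin (k + 2) → α) j)
      = F x + ((∑ i, F (a i)) + F z) := by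
  rw [Fin.sum_univ_succ]
  simp only [Fin.cons_zero, Fin.cons_succ]
  rw [Fin.sum_univ_castSucc]
  simp [Fin.snoc_castSucc, Fin.snoc_last]

end Helpers

set_option maxHeartbeats 1000000 in
/-- `‖μ(z) − μ(xzy)‖₁ ≤ (2/(|z|₀² + |z|₁))·(4|z|₀ + 4 + |x|_X + |y|_X)`, where `xzy` is
obtained from `z = (a, t)` by prepending the letter `x` and appending the letter `t·y`. -/
theorem mu_creation_estimate {X Γ : Type*} [Group Γ] [MulAction Γ X]
    (nX : X → ℝ) (nG : Γ → ℝ)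
    (hX0 : ∀ x, 0 ≤ nX x) (hG0 : ∀ g, 0 ≤ nG g)
    (hcompat : ∀ (g : Γ) (x : X), nX (g • x) ≤ nG g + nX x)
    (hsymm : ∀ g : Γ, nG g⁻¹ = nG g)
    (n : ℕ) (a : Fin (n + 1) → X) (t : Γ) (x y : X) :
    l1Norm (muTuple nX a t - muTuple nX (Fin.cons x (Fin.snoc a (t • y))) t) ≤
      (2 / (((n : ℝ) + 1) ^ 2 + ∑ i, min (nX (a i)) (nX (t⁻¹ • a i)))) *
        (4 * ((n : ℝ) + 1) + 4 + nX x + nX y) := by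
  classical
  set b : Fin (n + 1 + 2) → X := Fin.cons x (Fin.snoc a (t • y)) with hb
  set c : Fin (n + 1) → ℝ := fun i => min (nX (a i)) (nX (t⁻¹ • a i)) with hc
  set gx : ℝ := min (nX x) (nX (t⁻¹ • x)) with hgx
  set gy : ℝ := min (nX (t • y)) (nX (t⁻¹ • (t • y))) with hgy
  have hgx0 : 0 ≤ gx := le_min (hX0 x) (hX0 _)
  have hgy0 : 0 ≤ gy := le_min (hX0 _) (hX0 _)
  have hgxle : gx ≤ nX x := min_le_left _ _
  have hgyle : gy ≤ nX y := by
    have : t⁻¹ • (t • y) = y := inv_smul_smul t y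
    rw [hgy, this]; exact min_le_right _ _
  have hc0 : ∀ i, 0 ≤ c i := fun i => le_min (hX0 _) (hX0 _)
  set N1 : ℝ := ((n + 1 : ℕ) : ℝ) with hN1
  set N3 : ℝ := ((n + 1 + 2 : ℕ) : ℝ) with hN3
  -- the new omega as an explicit sum
  have hω' : omegaTuple nX b t
      = Finsupp.single x (N3 + gx)
        + ((∑ i, Finsupp.single (a i) (N3 + c i)) + Finsupp.single (t • y) (N3 + gy)) := by
    unfold omegaTuple
    exact sum_consSnoc (fun p => Finsupp.single p (N3 + min (nX p) (nX (t⁻¹ • p)))) a x (t • y)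
  have hωa : omegaTuple nX a t = ∑ i, Finsupp.single (a i) (N1 + c i) := rfl
  -- norms
  set S : ℝ := l1Norm (omegaTuple nX a t) with hSdef
  set S' : ℝ := l1Norm (omegaTuple nX b t) with hS'def
  have hC0 : 0 ≤ ∑ i, c i := Finset.sum_nonneg fun i _ => hc0 i
  have hN1v : N1 = (n : ℝ) + 1 := by rw [hN1]; push_cast; ring
  have hN10 : 0 ≤ N1 := by rw [hN1]; positivity
  have hN30 : 0 ≤ N3 := by rw [hN3]; positivity
  have hS : S = ((n : ℝ) + 1) ^ 2 + ∑ i, c i := by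
    rw [hSdef, hωa, l1Norm_sum_single _ _ _ (fun i => add_nonneg hN10 (hc0 i)),
      Finset.sum_add_distrib, Finset.sum_const, Finset.card_univ, Fintype.card_fin,
      nsmul_eq_mul, hN1v]
    push_cast; ring
  have hS'val : S' = (N3 + gx) + ((∑ i, (N3 + c i)) + (N3 + gy)) := by
    rw [hS'def]
    unfold omegaTuple
    rw [l1Norm_sum_single Finset.univ b
        (fun j => N3 + min (nX (b j)) (nX (t⁻¹ • b j)))
        (fun j => add_nonneg hN30 (le_min (hX0 _) (hX0 _)))]
    exact sum_consSnoc (fun p => N3 + min (nX p) (nX (t⁻¹ • p))) a x (t • y)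
  have hmid : ∑ i : Fin (n + 1), (N3 + c i) = ((n : ℝ) + 1) * N3 + ∑ i, c i := by
    rw [Finset.sum_add_distrib, Finset.sum_const, Finset.card_univ, Fintype.card_fin,
      nsmul_eq_mul]
    push_cast; ring
  have hS' : S' = S + ((4 * (n : ℝ) + 8) + (gx + gy)) := by
    rw [hS'val, hmid, hS, hN3]
    push_cast; ring
  have hSpos : 0 < S := by
    rw [hS]; nlinarith [hC0, sq_nonneg ((n : ℝ) + 1)]
  have hS'pos : 0 < S' := by rw [hS']; linarith
  have hSle : S ≤ S' := by rw [hS']; linarith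
  -- difference of omegas
  have hdiff : omegaTuple nX b t - omegaTuple nX a t
      = Finsupp.single x (N3 + gx)
        + ((∑ i, Finsupp.single (a i) (2 : ℝ)) + Finsupp.single (t • y) (N3 + gy)) := by
    rw [hω', hωa]
    have h2 : ∀ i : Fin (n + 1),
        Finsupp.single (a i) (N3 + c i)
          = Finsupp.single (a i) (2 : ℝ) + Finsupp.single (a i) (N1 + c i) := by
      intro i
      rw [← Finsupp.single_add]
      congr 1
      rw [hN3, hN1]; push_cast; ring
    rw [Finset.sum_congr rfl fun i _ => h2 i, Finset.sum_add_distrib]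
    abel
  -- bound on the difference
  set E : ℝ := 4 * ((n : ℝ) + 1) + 4 + nX x + nX y with hE
  have hE0 : 0 ≤ E := by rw [hE]; have := hX0 x; have := hX0 y; positivity
  have hL : l1Norm (omegaTuple nX a t - omegaTuple nX b t) ≤ E := by
    rw [show omegaTuple nX a t - omegaTuple nX b t
        = -(omegaTuple nX b t - omegaTuple nX a t) by abel, l1Norm_neg, hdiff]
    have b1 := l1Norm_single_le x (N3 + gx)
    have b3 := l1Norm_single_le (t • y) (N3 + gy)
    have b2 : l1Norm (∑ i : Fin (n + 1), Finsupp.single (a i) (2 : ℝ))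
        ≤ ((n : ℝ) + 1) * 2 := by
      refine (l1Norm_sum_le _ _).trans ?_
      refine (Finset.sum_le_sum fun i _ => l1Norm_single_le (a i) 2).trans ?_
      rw [Finset.sum_const, Finset.card_univ, Fintype.card_fin, nsmul_eq_mul]
      push_cast; simp [abs_of_nonneg]
    have habs1 : |N3 + gx| = N3 + gx := abs_of_nonneg (by linarith)
    have habs3 : |N3 + gy| = N3 + gy := abs_of_nonneg (by linarith)
    rw [habs1] at b1
    rw [habs3] at b3
    refine (l1Norm_add_le _ _).trans ?_
    refine (add_le_add le_rfl ((l1Norm_add_le _ _).trans (add_le_add b2 b3))).trans ?_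
    have hN3v : N3 = (n : ℝ) + 3 := by rw [hN3]; push_cast; ring
    calc l1Norm (Finsupp.single x (N3 + gx)) + (((n : ℝ) + 1) * 2 + (N3 + gy))
        ≤ (N3 + gx) + (((n : ℝ) + 1) * 2 + (N3 + gy)) := by linarith
      _ ≤ E := by rw [hE, hN3v]; linarith
  -- key algebraic identity
  have hkey : muTuple nX a t - muTuple nX b t
      = S⁻¹ • (omegaTuple nX a t - omegaTuple nX b t)
        + (S⁻¹ - S'⁻¹) • omegaTuple nX b t := by
    unfold muTuple
    rw [← hSdef, ← hS'def, smul_sub, sub_smul]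
    abel
  have hstep : l1Norm (muTuple nX a t - muTuple nX b t)
      ≤ S⁻¹ * E + (S⁻¹ - S'⁻¹) * S' := by
    rw [hkey]
    refine (l1Norm_add_le _ _).trans ?_
    rw [l1Norm_smul, l1Norm_smul, ← hS'def,
      abs_of_nonneg (le_of_lt (inv_pos.2 hSpos)),
      abs_of_nonneg (sub_nonneg.2 ((inv_anti₀ hSpos hSle)))]
    have := mul_le_mul_of_nonneg_left hL (le_of_lt (inv_pos.2 hSpos))
    linarith
  have hfinal : S⁻¹ * E + (S⁻¹ - S'⁻¹) * S' ≤ (2 / S) * E := by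
    have h1 : (S⁻¹ - S'⁻¹) * S' = (S' - S) / S := by
      field_simp
    rw [h1, hS']
    have h2 : (4 * (n : ℝ) + 8) + (gx + gy) ≤ E := by rw [hE]; linarith
    rw [div_eq_mul_inv, div_eq_mul_inv]
    have : S + (4 * (n : ℝ) + 8 + (gx + gy)) - S = 4 * (n : ℝ) + 8 + (gx + gy) := by ring
    rw [this]
    have h3 := mul_le_mul_of_nonneg_right h2 (le_of_lt (inv_pos.2 hSpos))
    nlinarith [inv_pos.2 hSpos]
  calc l1Norm (muTuple nX a t - muTuple nX b t) ≤ S⁻¹ * E + (S⁻¹ - S'⁻¹) * S' := hstep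
    _ ≤ (2 / S) * E := hfinal
    _ = (2 / (((n : ℝ) + 1) ^ 2 + ∑ i, c i)) * E := by rw [← hS]
    _ = _ := by rw [hE]
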